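/- arXiv:2202.02596 — 3 statements merged into one kernel-verified Lean document; each statement's English description precedes it below -/
import Mathlib

section
/- For every real β with π < β < 2π, there exists λ ∈ (3/2, 2) satisfying the Williams wedge eigenvalue equation sin((λ−1)β) = −(λ−1)·sin β. -/
open Real

/-- For every solid corner angle β with π < β < 2π, the Williams wedge
eigenvalue equation sin((λ−1)β) = −(λ−1) sin β has a solution λ ∈ (3/2, 2). -/
theorem stmt4 (β : ℝ) (h1 : π < β) (h2 : β < 2 * π) :
    ∃ lam : ℝ, 3 / 2 < lam ∧ lam < 2 ∧
      Real.sin ((lam - 1) * β) = -(lam - 1) * Real.sin β := by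
  set f : ℝ → ℝ := fun lam => Real.sin ((lam - 1) * β) + (lam - 1) * Real.sin β with hf
  have hcont : ContinuousOn f (Set.Icc (3/2 : ℝ) 2) := by
    apply Continuous.continuousOn
    fun_prop
  -- sin β < 0
  have hsinβ : Real.sin β < 0 := by
    have : 0 < Real.sin (β - π) := Real.sin_pos_of_pos_of_lt_pi (by linarith) (by linarith)
    rw [Real.sin_sub_pi] at this
    linarith
  -- f 2 < 0
  have hf2 : f 2 < 0 := by
    simp only [hf]
    norm_num
    linarith
  -- f (3/2) > 0
  have hsinhalf : 0 < Real.sin (β/2) := by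
    have hpi := Real.pi_pos
    exact Real.sin_pos_of_pos_of_lt_pi (by linarith) (by linarith)
  have hcoshalf : (-1 : ℝ) < Real.cos (β/2) := by
    have hpi := Real.pi_pos
    have := Real.cos_lt_cos_of_nonneg_of_le_pi (x := β/2) (by linarith) (le_refl π) (by linarith)
    rwa [Real.cos_pi] at this
  have hf32 : 0 < f (3/2) := by
    have h : f (3/2) = Real.sin (β/2) + (1/2) * Real.sin β := by
      simp only [hf]
      norm_num
      rw [show 1/2 * β = β/2 by ring]
    have hsin : Real.sin β = 2 * Real.sin (β/2) * Real.cos (β/2) := by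
      have := Real.sin_two_mul (β/2)
      rw [show 2 * (β/2) = β by ring] at this
      rw [this]
    rw [h, hsin]
    have : Real.sin (β/2) + 1/2 * (2 * Real.sin (β/2) * Real.cos (β/2))
        = Real.sin (β/2) * (1 + Real.cos (β/2)) := by ring
    rw [this]
    exact mul_pos hsinhalf (by linarith)
  have hivt := intermediate_value_Ioo' (a := (3/2 : ℝ)) (b := 2) (by norm_num) hcont
  have h0 : (0 : ℝ) ∈ Set.Ioo (f 2) (f (3/2)) := ⟨hf2, hf32⟩
  obtain ⟨lam, hlam, hfl⟩ := hivt h0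
  exact ⟨lam, hlam.1, hlam.2, by simp only [hf] at hfl; linarith⟩
end

section
/- Define ω(θ, r, p) := 3π/2 − arctan((r cos θ + p sin θ)/(r sin θ − p cos θ)). Let γ : ℝ → ℝ be differentiable, fix θ and r, and define f(p) := γ(ω(θ, r, p))·√(r² + p²). Then at every p with (r, p) ≠ (0,0) and r sin θ − p cos θ ≠ 0, f is differentiable with f′(p) = (γ(ω(θ,r,p))·p − γ′(ω(θ,r,p))·r)/√(r² + p²). Consequently, if in addition r > 0 and γ(ω(θ,r,p)) ≠ 0, then f′(p) = 0 if and only if γ′(ω(θ,r,p))/γ(ω(θ,r,p)) = p/r. -/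
open Real

/-- The surface orientation angle of the outward normal to a polar curve R = r(θ),
as a function of θ, r and p = dr/dθ. -/
noncomputable def orientationAngle (θ r p : ℝ) : ℝ :=
  3 * π / 2 -
    Real.arctan ((r * Real.cos θ + p * Real.sin θ) / (r * Real.sin θ - p * Real.cos θ))

/-!
Differentiating `q ↦ (r cos θ + q sin θ)/(r sin θ - q cos θ)` gives `r / D²` with
`D = r sin θ - p cos θ`, and since rotating `(r, p)` by `θ` preserves its length, the chain rule
through `arctan` yields `ω' = -r / (r² + p²)`. The product rule against
`(√(r² + q²))' = p / √(r² + p²)` then gives `f' = (γ(ω) p - γ'(ω) r) / √(r² + p²)`, and for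
`r ≠ 0`, `γ(ω) ≠ 0` its vanishing is the cross-multiplied form of `γ'(ω)/γ(ω) = p/r`.
-/

lemma sq_add_sq_rotate (θ r p : ℝ) :
    (r * cos θ + p * sin θ) ^ 2 + (r * sin θ - p * cos θ) ^ 2 = r ^ 2 + p ^ 2 := by
  linear_combination (r ^ 2 + p ^ 2) * sin_sq_add_cos_sq θ

lemma hasDerivAt_orientationAngle {θ r p : ℝ} (hD : r * sin θ - p * cos θ ≠ 0) :
    HasDerivAt (orientationAngle θ r) (-(r / (r ^ 2 + p ^ 2))) p := by
  have hnum : HasDerivAt (fun q => r * cos θ + q * sin θ) (sin θ) p := by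
    simpa using ((hasDerivAt_id p).mul_const (sin θ)).const_add (r * cos θ)
  have hden : HasDerivAt (fun q => r * sin θ - q * cos θ) (-cos θ) p := by
    simpa using ((hasDerivAt_id p).mul_const (cos θ)).const_sub (r * sin θ)
  have hquot : HasDerivAt (fun q => (r * cos θ + q * sin θ) / (r * sin θ - q * cos θ))
      (r / (r * sin θ - p * cos θ) ^ 2) p := by
    refine (hnum.div hden hD).congr_deriv ?_
    rw [div_left_inj' (pow_ne_zero 2 hD)]
    linear_combination r * sin_sq_add_cos_sq θ
  have harctan := (hasDerivAt_arctan _).comp p hquot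
  refine (harctan.const_sub (3 * π / 2)).congr_deriv ?_
  rw [← sq_add_sq_rotate θ r p]
  generalize r * cos θ + p * sin θ = N
  generalize r * sin θ - p * cos θ = D at hD ⊢
  field_simp
  ring

lemma hasDerivAt_sqrt_sq_add_sq {r p : ℝ} (h : r ^ 2 + p ^ 2 ≠ 0) :
    HasDerivAt (fun q => √(r ^ 2 + q ^ 2)) (p / √(r ^ 2 + p ^ 2)) p := by
  have hsq : HasDerivAt (fun q : ℝ => r ^ 2 + q ^ 2) (2 * p) p := by
    simpa using (hasDerivAt_pow 2 p).const_add (r ^ 2)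
  convert hsq.sqrt h using 1
  field_simp

lemma hasDerivAt_comp_orientationAngle_mul_sqrt {γ : ℝ → ℝ} {θ r p : ℝ}
    (hγ : DifferentiableAt ℝ γ (orientationAngle θ r p)) (hD : r * sin θ - p * cos θ ≠ 0) :
    HasDerivAt (fun q => γ (orientationAngle θ r q) * √(r ^ 2 + q ^ 2))
      ((γ (orientationAngle θ r p) * p - deriv γ (orientationAngle θ r p) * r) /
        √(r ^ 2 + p ^ 2)) p := by
  have hpos : 0 < r ^ 2 + p ^ 2 := by
    rw [← sq_add_sq_rotate θ r p]
    positivity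
  have hf := (hγ.hasDerivAt.comp p (hasDerivAt_orientationAngle hD)).mul
    (hasDerivAt_sqrt_sq_add_sq hpos.ne')
  refine hf.congr_deriv ?_
  rw [Function.comp_apply]
  have hs : √(r ^ 2 + p ^ 2) ^ 2 = r ^ 2 + p ^ 2 := sq_sqrt hpos.le
  field_simp
  linear_combination (-(deriv γ (orientationAngle θ r p) * r)) * hs

lemma mul_sub_mul_div_eq_zero_iff_div_eq_div {K : Type*} [Field K] {g g' p r s : K}
    (hg : g ≠ 0) (hr : r ≠ 0) (hs : s ≠ 0) :
    (g * p - g' * r) / s = 0 ↔ g' / g = p / r := by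
  rw [div_eq_zero_iff, or_iff_left hs, sub_eq_zero, div_eq_div_iff hg hr]
  constructor <;> intro h <;> linear_combination -h

theorem stmt8_general (γ : ℝ → ℝ) (hγ : Differentiable ℝ γ) (θ r p : ℝ)
    (hD : r * Real.sin θ - p * Real.cos θ ≠ 0) :
    HasDerivAt (fun q => γ (orientationAngle θ r q) * Real.sqrt (r ^ 2 + q ^ 2))
      ((γ (orientationAngle θ r p) * p - deriv γ (orientationAngle θ r p) * r) /
        Real.sqrt (r ^ 2 + p ^ 2)) p ∧
    (0 < r → γ (orientationAngle θ r p) ≠ 0 →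
      ((γ (orientationAngle θ r p) * p - deriv γ (orientationAngle θ r p) * r) /
          Real.sqrt (r ^ 2 + p ^ 2) = 0 ↔
        deriv γ (orientationAngle θ r p) / γ (orientationAngle θ r p) = p / r)) :=
  ⟨hasDerivAt_comp_orientationAngle_mul_sqrt (hγ _) hD, fun hr hg =>
    mul_sub_mul_div_eq_zero_iff_div_eq_div hg hr.ne' (by positivity)⟩

/-- For differentiable γ and f(p) := γ(ω(θ,r,p))·√(r²+p²), at every p with
(r,p) ≠ (0,0) and r sin θ − p cos θ ≠ 0 we have
f′(p) = (γ(ω)·p − γ′(ω)·r)/√(r²+p²); consequently if r > 0 and γ(ω) ≠ 0 then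
f′(p) = 0 ↔ γ′(ω)/γ(ω) = p/r (the corner angle condition). -/
theorem stmt8 (γ : ℝ → ℝ) (hγ : Differentiable ℝ γ) (θ r p : ℝ)
    (h0 : (r, p) ≠ (0, 0)) (hD : r * Real.sin θ - p * Real.cos θ ≠ 0) :
    HasDerivAt (fun q => γ (orientationAngle θ r q) * Real.sqrt (r ^ 2 + q ^ 2))
      ((γ (orientationAngle θ r p) * p - deriv γ (orientationAngle θ r p) * r) /
        Real.sqrt (r ^ 2 + p ^ 2)) p ∧
    (0 < r → γ (orientationAngle θ r p) ≠ 0 →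
      ((γ (orientationAngle θ r p) * p - deriv γ (orientationAngle θ r p) * r) /
          Real.sqrt (r ^ 2 + p ^ 2) = 0 ↔
        deriv γ (orientationAngle θ r p) / γ (orientationAngle θ r p) = p / r)) :=
  stmt8_general γ hγ θ r p hD
end

section
/- Let U ⊆ ℂ be open and let φ, ς : ℂ → ℂ be complex differentiable (holomorphic) on U. Define the Airy stress function W(x, y) := Re((x − iy)·φ(x + iy) + ς(x + iy)) for x + iy ∈ U. Then W is twice continuously differentiable on the corresponding open subset of ℝ² and its Laplacian satisfies ∂²W/∂x² + ∂²W/∂y² = 4·Re(φ′(x + iy)); equivalently, with σ_{xx} = ∂²W/∂y² and σ_{yy} = ∂²W/∂x², the first Kolosov–Muskhelishvili formula σ_{xx} + σ_{yy} = 4 Re{φ′(z)} holds. -/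
/-!
Write `W = Re G` with `G z = conj z * φ z + ς z`. Along horizontal lines `G` has derivative
`G₁ + φ`, along vertical lines `I * (G₁ - φ)`, where `G₁` is the same construction for
`(φ', ς')`. Differentiating once more gives `G₂ + 2 φ'` and `2 φ' - G₂`, whose sum is `4 φ'`.
-/

open Complex ComplexConjugate Topology

theorem conj_ofReal_add_ofReal_mul_I (x y : ℝ) : conj ((x : ℂ) + y * I) = x - y * I := by
  simp [sub_eq_add_neg]

section Lines

variable {f : ℂ → ℂ} {f' : ℂ} {x y : ℝ}

theorem HasDerivAt.comp_horizontal (hf : HasDerivAt f f' (x + y * I)) :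
    HasDerivAt (fun t : ℝ => f (t + y * I)) f' x := by
  simpa using (hf.comp_add_const (x : ℂ) (y * I)).comp_ofReal

theorem HasDerivAt.comp_vertical (hf : HasDerivAt f f' (x + y * I)) :
    HasDerivAt (fun t : ℝ => f (x + t * I)) (f' * I) y := by
  have hline : HasDerivAt (fun w : ℂ => x + w * I) I y := by
    simpa using ((hasDerivAt_id (y : ℂ)).mul_const I).const_add (x : ℂ)
  simpa using (hf.comp (y : ℂ) hline).comp_ofReal

theorem hasDerivAt_conj_horizontal (x y : ℝ) :
    HasDerivAt (fun t : ℝ => conj ((t : ℂ) + y * I)) 1 x := by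
  simp only [conj_ofReal_add_ofReal_mul_I]
  simpa using (hasDerivAt_id x).ofReal_comp.sub_const ((y : ℂ) * I)

theorem hasDerivAt_conj_vertical (x y : ℝ) :
    HasDerivAt (fun t : ℝ => conj ((x : ℂ) + t * I)) (-I) y := by
  simp only [conj_ofReal_add_ofReal_mul_I]
  simpa using ((hasDerivAt_id y).ofReal_comp.mul_const I).const_sub (x : ℂ)

end Lines

theorem HasDerivAt.re {g : ℝ → ℂ} {g' : ℂ} {x : ℝ} (hg : HasDerivAt g g' x) :
    HasDerivAt (fun t => (g t).re) g'.re x :=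
  reCLM.hasFDerivAt.comp_hasDerivAt x hg

theorem deriv_deriv_re_eq {g g' : ℝ → ℂ} {g'' : ℂ} {s : Set ℝ} {x : ℝ} (hs : s ∈ 𝓝 x)
    (hg : ∀ t ∈ s, HasDerivAt g (g' t) t) (hg' : HasDerivAt g' g'' x) :
    deriv (deriv fun t => (g t).re) x = g''.re := by
  have hderiv : deriv (fun t => (g t).re) =ᶠ[𝓝 x] fun t => (g' t).re := by
    filter_upwards [hs] with t ht using (hg t ht).re.deriv
  rw [hderiv.deriv_eq, hg'.re.deriv]

def goursatPotential (φ ς : ℂ → ℂ) (z : ℂ) : ℂ := conj z * φ z + ς z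

section GoursatPotential

variable {U : Set ℂ} {φ ς : ℂ → ℂ} {x y : ℝ}

theorem hasDerivAt_goursatPotential_horizontal (hφ : DifferentiableAt ℂ φ (x + y * I))
    (hς : DifferentiableAt ℂ ς (x + y * I)) :
    HasDerivAt (fun t : ℝ => goursatPotential φ ς (t + y * I))
      (goursatPotential (deriv φ) (deriv ς) (x + y * I) + φ (x + y * I)) x := by
  have h := ((hasDerivAt_conj_horizontal x y).mul hφ.hasDerivAt.comp_horizontal).add
    hς.hasDerivAt.comp_horizontal
  exact h.congr_deriv (by rw [goursatPotential]; ring)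

theorem hasDerivAt_goursatPotential_vertical (hφ : DifferentiableAt ℂ φ (x + y * I))
    (hς : DifferentiableAt ℂ ς (x + y * I)) :
    HasDerivAt (fun t : ℝ => goursatPotential φ ς (x + t * I))
      (I * (goursatPotential (deriv φ) (deriv ς) (x + y * I) - φ (x + y * I))) y := by
  have h := ((hasDerivAt_conj_vertical x y).mul hφ.hasDerivAt.comp_vertical).add
    hς.hasDerivAt.comp_vertical
  exact h.congr_deriv (by rw [goursatPotential]; ring)

theorem deriv_deriv_re_goursatPotential_horizontal (hU : IsOpen U)
    (hφ : DifferentiableOn ℂ φ U) (hς : DifferentiableOn ℂ ς U) (hz : (x : ℂ) + y * I ∈ U) :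
    deriv (deriv fun t : ℝ => (goursatPotential φ ς (t + y * I)).re) x =
      (goursatPotential (deriv (deriv φ)) (deriv (deriv ς)) (x + y * I)
        + 2 * deriv φ (x + y * I)).re := by
  have hline : {t : ℝ | (t : ℂ) + y * I ∈ U} ∈ 𝓝 x := (hU.preimage (by fun_prop)).mem_nhds hz
  refine deriv_deriv_re_eq hline (fun t ht => hasDerivAt_goursatPotential_horizontal
    (hφ.differentiableAt (hU.mem_nhds ht)) (hς.differentiableAt (hU.mem_nhds ht))) ?_
  have hnhds := hU.mem_nhds hz
  have h := (hasDerivAt_goursatPotential_horizontal ((hφ.deriv hU).differentiableAt hnhds)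
    ((hς.deriv hU).differentiableAt hnhds)).add
      (hφ.differentiableAt hnhds).hasDerivAt.comp_horizontal
  exact h.congr_deriv (by ring)

theorem deriv_deriv_re_goursatPotential_vertical (hU : IsOpen U)
    (hφ : DifferentiableOn ℂ φ U) (hς : DifferentiableOn ℂ ς U) (hz : (x : ℂ) + y * I ∈ U) :
    deriv (deriv fun t : ℝ => (goursatPotential φ ς (x + t * I)).re) y =
      (2 * deriv φ (x + y * I)
        - goursatPotential (deriv (deriv φ)) (deriv (deriv ς)) (x + y * I)).re := by
  have hline : {t : ℝ | (x : ℂ) + t * I ∈ U} ∈ 𝓝 y := (hU.preimage (by fun_prop)).mem_nhds hz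
  refine deriv_deriv_re_eq hline (fun t ht => hasDerivAt_goursatPotential_vertical
    (hφ.differentiableAt (hU.mem_nhds ht)) (hς.differentiableAt (hU.mem_nhds ht))) ?_
  have hnhds := hU.mem_nhds hz
  have h := ((hasDerivAt_goursatPotential_vertical ((hφ.deriv hU).differentiableAt hnhds)
    ((hς.deriv hU).differentiableAt hnhds)).sub
      (hφ.differentiableAt hnhds).hasDerivAt.comp_vertical).const_mul I
  refine h.congr_deriv ?_
  linear_combination (goursatPotential (deriv (deriv φ)) (deriv (deriv ς)) (x + y * I)
    - 2 * deriv φ (x + y * I)) * I_mul_I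

theorem laplacian_re_goursatPotential (hU : IsOpen U)
    (hφ : DifferentiableOn ℂ φ U) (hς : DifferentiableOn ℂ ς U) (hz : (x : ℂ) + y * I ∈ U) :
    deriv (deriv fun t : ℝ => (goursatPotential φ ς (t + y * I)).re) x
      + deriv (deriv fun t : ℝ => (goursatPotential φ ς (x + t * I)).re) y
      = 4 * (deriv φ (x + y * I)).re := by
  rw [deriv_deriv_re_goursatPotential_horizontal hU hφ hς hz,
    deriv_deriv_re_goursatPotential_vertical hU hφ hς hz, ← add_re]
  set G := goursatPotential (deriv (deriv φ)) (deriv (deriv ς)) (x + y * I)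
  rw [show G + 2 * deriv φ (x + y * I) + (2 * deriv φ (x + y * I) - G)
    = ((4 : ℝ) : ℂ) * deriv φ (x + y * I) by push_cast; ring, re_ofReal_mul]

theorem contDiffOn_re_goursatPotential {n : WithTop ℕ∞} (hU : IsOpen U)
    (hφ : DifferentiableOn ℂ φ U) (hς : DifferentiableOn ℂ ς U) :
    ContDiffOn ℝ n (fun p : ℝ × ℝ => (goursatPotential φ ς (p.1 + p.2 * I)).re)
      {p | (p.1 : ℂ) + p.2 * I ∈ U} := by
  have hG : ContDiffOn ℝ n (goursatPotential φ ς) U :=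
    (conjCLE.contDiff.contDiffOn.mul ((hφ.contDiffOn hU).restrict_scalars ℝ)).add
      ((hς.contDiffOn hU).restrict_scalars ℝ)
  have hchart : ContDiff ℝ n fun p : ℝ × ℝ => (p.1 : ℂ) + p.2 * I :=
    (ofRealCLM.contDiff.comp contDiff_fst).add
      ((ofRealCLM.contDiff.comp contDiff_snd).mul contDiff_const)
  exact reCLM.contDiff.comp_contDiffOn (hG.comp hchart.contDiffOn fun _ hp => hp)

end GoursatPotential

/-- first Kolosov–Muskhelishvili formula: for φ, ς holomorphic on an open
set U ⊆ ℂ, the Airy stress function W(x,y) = Re((x − iy) φ(x+iy) + ς(x+iy)) is twice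
continuously differentiable and satisfies ΔW = W_xx + W_yy = 4 Re φ′(z), i.e. with
σ_xx = W_yy and σ_yy = W_xx, σ_xx + σ_yy = 4 Re φ′(z). -/
theorem stmt13 (U : Set ℂ) (hU : IsOpen U) (φ ς : ℂ → ℂ)
    (hφ : DifferentiableOn ℂ φ U) (hς : DifferentiableOn ℂ ς U) :
    let W : ℝ → ℝ → ℝ := fun x y =>
      (((x : ℂ) - (y : ℂ) * Complex.I) * φ ((x : ℂ) + (y : ℂ) * Complex.I) +
        ς ((x : ℂ) + (y : ℂ) * Complex.I)).re
    ContDiffOn ℝ 2 (fun p : ℝ × ℝ => W p.1 p.2)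
        {p : ℝ × ℝ | (p.1 : ℂ) + (p.2 : ℂ) * Complex.I ∈ U} ∧
    ∀ x y : ℝ, (x : ℂ) + (y : ℂ) * Complex.I ∈ U →
      deriv (deriv (fun x' : ℝ => W x' y)) x + deriv (deriv (fun y' : ℝ => W x y')) y
        = 4 * (deriv φ ((x : ℂ) + (y : ℂ) * Complex.I)).re := by
  intro W
  have hW : ∀ x y : ℝ, W x y = (goursatPotential φ ς (x + y * I)).re := fun x y => by
    simp only [W, goursatPotential, conj_ofReal_add_ofReal_mul_I]
  refine ⟨(contDiffOn_re_goursatPotential hU hφ hς).congr fun p _ => hW p.1 p.2,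
    fun x y hz => ?_⟩
  simp only [hW]
  exact laplacian_re_goursatPotential hU hφ hς hz
end
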